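/- Let ε, ε' ∈ {1,−1} and let τ_P, τ_Q : ℂ → ℂ satisfy the TQ-relations at the inhomogeneities: ε·τ_P(ξ_i)·P(ξ_i) = −a(ξ_i)·P(ξ_i−η) and ε'·τ_Q(ξ_i)·Q(ξ_i) = −a(ξ_i)·Q(ξ_i−η) for all i = 1,…,N. Assume also P(ξ_i−η)·P(ξ_i+iπ) = −P(ξ_i−η+iπ)·P(ξ_i), P(ξ_i) ≠ 0, P(ξ_i+iπ) ≠ 0, Q(ξ_i) ≠ 0, Q(ξ_i−η) ≠ 0, τ_Q(ξ_i) ≠ 0 for all i, and the genericity conditions ξ_i − ξ_j ∉ iπℤ for i ≠ j, p_i − p_j ∉ iπℤ for i ≠ j, ξ_i − p_k ∉ iπℤ, ξ_i − p_k − η ∉ iπℤ for all i, k. Then for every β ∈ ℂ: S(PQ, εε'β) = det_{1≤i,k≤N} [ τ_Q(ξ_i)/sinh(ξ_i−p_k) − β·τ_P(ξ_i)/sinh(ξ_i−p_k−η) ] / det_{1≤i,k≤N} [ τ_Q(ξ_i)/sinh(ξ_i−p_k) ]. -/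

import Mathlib

open Complex Finset

noncomputable section

def Vand {m : ℕ} (x : Fin m → ℂ) : ℂ :=
  ∏ i : Fin m, ∏ j ∈ Finset.Ioi i, Complex.sinh (x j - x i)

def trigPoly {N : ℕ} (r : Fin N → ℂ) (l : ℂ) : ℂ := ∏ j, Complex.sinh ((l - r j) / 2)
def afun {N : ℕ} (η : ℂ) (ξ : Fin N → ℂ) (l : ℂ) : ℂ := ∏ n, Complex.sinh (l - ξ n + η)
def iπ : ℂ := (Real.pi : ℂ) * Complex.I

/-- the scalar product `S(PQ,α)` of two separate states -/
def SP {N : ℕ} (η : ℂ) (ξ : Fin N → ℂ) (P Q : ℂ → ℂ) (α : ℂ) : ℂ :=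
  ∑ h : Fin N → Fin 2,
    (∏ n, (α * P (ξ n) * Q (ξ n) / (P (ξ n - η) * Q (ξ n - η))) ^ (1 - (h n : ℕ))) *
      Vand (fun n => ξ n - ((1 - (h n : ℕ) : ℕ) : ℂ) * η) / Vand ξ

/-!
Every row of the numerator matrix is a `τ_Q`-weighted row `1 / sinh (ξ_i - p_k)` minus a
`τ_P`-weighted row `1 / sinh (ξ_i - η - p_k)`, so by multilinearity the numerator is a sum over
`h ∈ {0,1}^N` of weighted Cauchy determinants with nodes `x_i = ξ_i - (1 - h_i) η`. The Cauchy
determinant `det [1 / sinh (x_i - p_k)] = V(x) V(-p) / ∏_{i,k} sinh (x_i - p_k)` evaluates each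
of them; dividing by the denominator (the term `h = 1`) leaves `V(x) / V(ξ)` times one weight
ratio per shifted row. Since `∏_k sinh (λ - p_k) = (-2i)^N P(λ) P(λ + iπ)`, the TQ-relations and
the relation between `P(ξ_i - η + iπ)` and `P(ξ_i + iπ)` identify that ratio with
`εε'β P(ξ_i) Q(ξ_i) / (P(ξ_i - η) Q(ξ_i - η))`.
-/

namespace Matrix

theorem det_of_sum {n ι R : Type*} [Fintype n] [DecidableEq n] [Fintype ι] [CommRing R]
    (F : n → ι → n → R) :
    (of fun i k => ∑ j, F i j k).det = ∑ h : n → ι, (of fun i k => F i (h i) k).det := by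
  have hrows : (of fun i k => ∑ j, F i j k) = fun i => ∑ j, F i j := by
    ext i k
    simp [Finset.sum_apply]
  rw [hrows]
  exact (detRowAlternating (R := R) (n := n)).toMultilinearMap.map_sum F

variable {K : Type*} [Field K]

theorem det_succ_eq_mul_det_schur {n : ℕ} (A : Matrix (Fin (n + 1)) (Fin (n + 1)) K)
    (h : A 0 0 ≠ 0) :
    A.det =
      A 0 0 * (of fun i k : Fin n => A i.succ k.succ - A i.succ 0 / A 0 0 * A 0 k.succ).det := by
  let B : Matrix (Fin (n + 1)) (Fin (n + 1)) K :=
    of fun i k => if i = 0 then A 0 k else A i k - A i 0 / A 0 0 * A 0 k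
  have hAB : A.det = B.det :=
    det_eq_of_forall_row_eq_smul_add_const (fun i => if i = 0 then 0 else A i 0 / A 0 0) 0
      (by simp) fun i k => by by_cases hi : i = 0 <;> simp [B, hi]
  rw [hAB, det_succ_column_zero, Fin.sum_univ_succ, Finset.sum_eq_zero]
  · simp [B, h]
    rfl
  · intro i _
    simp [B, Fin.succ_ne_zero, h]

theorem det_inv_cauchy_mul_prod {n : ℕ} (a b c d : Fin n → K)
    (he : ∀ i k, a i * d k - c i * b k ≠ 0) :
    (of fun i k => (a i * d k - c i * b k)⁻¹).det * ∏ i, ∏ k, (a i * d k - c i * b k) =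
      ∏ i, ∏ j ∈ Ioi i, (a j * c i - a i * c j) * (b i * d j - b j * d i) := by
  induction n with
  | zero => simp
  | succ n ih =>
    have ih' := ih (fun i => a i.succ) (fun k => b k.succ) (fun i => c i.succ) (fun k => d k.succ)
      fun i k => he _ _
    set e : Fin (n + 1) → Fin (n + 1) → K := fun i k => a i * d k - c i * b k with he_def
    -- the Schur complement of a Cauchy matrix is a Cauchy matrix up to row and column factors
    have hschur : ∀ i k : Fin n,
        e i.succ 0 * e 0 k.succ - e 0 0 * e i.succ k.succ =
          (a 0 * c i.succ - a i.succ * c 0) * (d 0 * b k.succ - b 0 * d k.succ) := by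
      intro i k; simp only [he_def]; ring
    have hpivot :
        ∏ j : Fin n, (a j.succ * c 0 - a 0 * c j.succ) * (b 0 * d j.succ - b j.succ * d 0) =
        ∏ j : Fin n, (a 0 * c j.succ - a j.succ * c 0) * (d 0 * b j.succ - b 0 * d j.succ) :=
      prod_congr rfl fun j _ => by ring
    change (of fun i k : Fin n => (e i.succ k.succ)⁻¹).det *
      ∏ i : Fin n, ∏ k : Fin n, e i.succ k.succ = _ at ih'
    change ∀ i k, e i k ≠ 0 at he
    change (of fun i k => (e i k)⁻¹).det * ∏ i, ∏ k, e i k = _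
    clear_value e
    have hcol : ∏ i : Fin n, e i.succ 0 ≠ 0 := prod_ne_zero_iff.mpr fun i _ => he _ _
    have hrow : ∏ k : Fin n, e 0 k.succ ≠ 0 := prod_ne_zero_iff.mpr fun k _ => he _ _
    have hM :
        (of fun i k : Fin n => (e i.succ k.succ)⁻¹ - (e i.succ 0)⁻¹ / (e 0 0)⁻¹ * (e 0 k.succ)⁻¹) =
        of fun i k => (a 0 * c i.succ - a i.succ * c 0) / e i.succ 0 *
          (of fun i k => (d 0 * b k.succ - b 0 * d k.succ) / e 0 k.succ *
            (of fun i k => (e i.succ k.succ)⁻¹) i k) i k := by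
      ext i k
      have h1 : e i.succ k.succ ≠ 0 := he _ _
      have h2 : e i.succ 0 ≠ 0 := he _ _
      have h3 : e 0 k.succ ≠ 0 := he _ _
      simp only [of_apply, inv_div_inv]
      field_simp
      linear_combination hschur i k
    rw [det_succ_eq_mul_det_schur _ (by simpa using he 0 0)]
    simp only [of_apply]
    rw [hM, det_mul_column, det_mul_row]
    simp only [Fin.prod_univ_succ, Fin.prod_Ioi_zero, Fin.prod_Ioi_succ, prod_div_distrib]
    rw [hpivot, ← ih', prod_mul_distrib, prod_mul_distrib]
    have h00 : e 0 0 ≠ 0 := he 0 0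
    generalize ∏ i : Fin n, (a 0 * c i.succ - a i.succ * c 0) = A
    generalize ∏ k : Fin n, (d 0 * b k.succ - b 0 * d k.succ) = B
    field_simp

end Matrix

theorem sinh_ne_zero_of_forall_ne_int_mul_iπ {z : ℂ} (h : ∀ m : ℤ, z ≠ m * iπ) : sinh z ≠ 0 := by
  intro h0
  obtain ⟨k, hk⟩ := sin_eq_zero_iff.mp (show sin (z * I) = 0 by rw [sin_mul_I, h0, zero_mul])
  apply h (-k)
  simp only [iπ]
  push_cast
  linear_combination (-I) * hk + z * I_sq

theorem sinh_eq_mul_sinh_half_mul_sinh_half_add (z : ℂ) :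
    sinh z = -2 * I * (sinh (z / 2) * sinh ((z + iπ) / 2)) := by
  have h : sinh ((z + iπ) / 2) = cosh (z / 2) * I := by
    rw [show (z + iπ) / 2 = z / 2 + (Real.pi / 2 : ℂ) * I by simp only [iπ]; ring, sinh_add,
      cosh_mul_I, sinh_mul_I, ← ofReal_ofNat, ← ofReal_div, ← ofReal_cos, ← ofReal_sin,
      Real.cos_pi_div_two, Real.sin_pi_div_two]
    simp
  rw [h, show z = 2 * (z / 2) by ring, sinh_two_mul]
  ring_nf
  rw [I_sq]
  ring

theorem vand_ne_zero {n : ℕ} {x : Fin n → ℂ} (h : ∀ i j, i ≠ j → ∀ m : ℤ, x i - x j ≠ m * iπ) :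
    Vand x ≠ 0 :=
  prod_ne_zero_iff.mpr fun i _ => prod_ne_zero_iff.mpr fun j hj =>
    sinh_ne_zero_of_forall_ne_int_mul_iπ (h j i (mem_Ioi.mp hj).ne')

theorem det_inv_sinh_sub_mul_prod {n : ℕ} (x y : Fin n → ℂ) (h : ∀ i k, sinh (x i - y k) ≠ 0) :
    (Matrix.of fun i k => (sinh (x i - y k))⁻¹).det * ∏ i, ∏ k, sinh (x i - y k) =
      Vand x * Vand (-y) := by
  have hentry : ∀ u v : ℂ, exp u * (exp (-v) / 2) - exp (-u) * (exp v / 2) = sinh (u - v) := by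
    intro u v
    simp only [sinh, sub_eq_add_neg, neg_add, neg_neg, exp_add]
    ring
  have hpair : ∀ u v u' v' : ℂ,
      (exp v * exp (-u) - exp u * exp (-v)) *
          (exp u' / 2 * (exp (-v') / 2) - exp v' / 2 * (exp (-u') / 2)) =
        sinh (v - u) * sinh (-v' - -u') := by
    intro u v u' v'
    simp only [sinh, sub_eq_add_neg, neg_add, neg_neg, exp_add]
    ring
  have := Matrix.det_inv_cauchy_mul_prod (fun i => exp (x i)) (fun k => exp (y k) / 2)
    (fun i => exp (-x i)) (fun k => exp (-y k) / 2) fun i k => by rw [hentry]; exact h i k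
  simp only [hentry, hpair, prod_mul_distrib] at this
  rw [this, Vand, Vand]
  rfl

theorem det_div_sinh_sub {n : ℕ} (w x y : Fin n → ℂ) (h : ∀ i k, sinh (x i - y k) ≠ 0) :
    (Matrix.of fun i k => w i / sinh (x i - y k)).det =
      (∏ i, w i / ∏ k, sinh (x i - y k)) * (Vand x * Vand (-y)) := by
  have hprod : ∏ i, ∏ k, sinh (x i - y k) ≠ 0 :=
    prod_ne_zero_iff.mpr fun i _ => prod_ne_zero_iff.mpr fun k _ => h i k
  have hcols : (Matrix.of fun i k => w i / sinh (x i - y k)) =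
      Matrix.of fun i k => w i * (Matrix.of fun i k => (sinh (x i - y k))⁻¹) i k := by
    ext i k
    simp [div_eq_mul_inv]
  rw [hcols, Matrix.det_mul_column, eq_div_of_mul_eq hprod (det_inv_sinh_sub_mul_prod x y h),
    prod_div_distrib, mul_div_assoc', div_mul_eq_mul_div]

theorem det_sub_div_sinh_sub_shift {n : ℕ} (u v x y : Fin n → ℂ) (η : ℂ)
    (h : ∀ i k, sinh (x i - y k) ≠ 0) (hη : ∀ i k, sinh (x i - y k - η) ≠ 0) :
    (Matrix.of fun i k => u i / sinh (x i - y k) - v i / sinh (x i - y k - η)).det =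
      ∑ c : Fin n → Fin 2,
        (∏ i, (if c i = 0 then -v i else u i) /
          ∏ k, sinh (x i - ((1 - (c i : ℕ) : ℕ) : ℂ) * η - y k)) *
        (Vand (fun i => x i - ((1 - (c i : ℕ) : ℕ) : ℂ) * η) * Vand (-y)) := by
  set z : Fin n → Fin 2 → ℂ := fun i j => x i - ((1 - (j : ℕ) : ℕ) : ℂ) * η
  have hz : ∀ i, z i 0 = x i - η ∧ z i 1 = x i := fun i => by simp [z]
  have hrows : (Matrix.of fun i k => u i / sinh (x i - y k) - v i / sinh (x i - y k - η)) =
      Matrix.of fun i k => ∑ j, (if j = 0 then -v i else u i) / sinh (z i j - y k) := by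
    ext i k
    simp only [Matrix.of_apply, Fin.sum_univ_two, (hz i).1, (hz i).2, Fin.isValue, ↓reduceIte,
      one_ne_zero, sub_right_comm (x i) η]
    ring
  rw [hrows, Matrix.det_of_sum]
  refine sum_congr rfl fun c _ => det_div_sinh_sub _ _ y fun i k => ?_
  rcases Fin.exists_fin_two.mp ⟨c i, rfl⟩ with hc | hc <;> rw [hc]
  · simpa [(hz i).1, sub_right_comm (x i) η] using hη i k
  · simpa [(hz i).2] using h i k

theorem prod_sinh_sub_eq_trigPoly_mul {N : ℕ} (r : Fin N → ℂ) (l : ℂ) :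
    ∏ k, sinh (l - r k) = (-2 * I) ^ N * (trigPoly r l * trigPoly r (l + iπ)) := by
  rw [trigPoly, trigPoly, ← prod_mul_distrib, show (-2 * I) ^ N = ∏ _k : Fin N, (-2 * I) by simp,
    ← prod_mul_distrib]
  exact prod_congr rfl fun k _ => by
    rw [sinh_eq_mul_sinh_half_mul_sinh_half_add, show l + iπ - r k = l - r k + iπ by ring]

theorem row_weight_eq {N : ℕ} (p q : Fin N → ℂ) {η l ε ε' β A τP τQ : ℂ} (hε : ε * ε = 1)
    (hTQP : ε * τP * trigPoly p l = -(A * trigPoly p (l - η)))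
    (hTQQ : ε' * τQ * trigPoly q l = -(A * trigPoly q (l - η)))
    (hPper : trigPoly p (l - η) * trigPoly p (l + iπ) = -(trigPoly p (l - η + iπ) * trigPoly p l))
    (h0 : ∀ k, sinh (l - p k) ≠ 0) (hη : ∀ k, sinh (l - p k - η) ≠ 0)
    (hQ : trigPoly q (l - η) ≠ 0) (j : Fin 2) :
    (if j = 0 then -(β * τP) else τQ) / ∏ k, sinh (l - ((1 - (j : ℕ) : ℕ) : ℂ) * η - p k) =
      (ε * ε' * β * trigPoly p l * trigPoly q l / (trigPoly p (l - η) * trigPoly q (l - η))) ^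
          (1 - (j : ℕ)) * (τQ / ∏ k, sinh (l - p k)) := by
  rcases Fin.exists_fin_two.mp ⟨j, rfl⟩ with rfl | rfl
  swap
  · simp
  simp only [Fin.isValue, ↓reduceIte, Fin.val_zero, Nat.cast_one, one_mul, tsub_zero, pow_one]
  have hη' : ∏ k, sinh (l - η - p k) ≠ 0 :=
    prod_ne_zero_iff.mpr fun k _ => by simpa [sub_right_comm l η] using hη k
  have h0' : ∏ k, sinh (l - p k) ≠ 0 := prod_ne_zero_iff.mpr fun k _ => h0 k
  rw [prod_sinh_sub_eq_trigPoly_mul] at h0' hη' ⊢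
  rw [prod_sinh_sub_eq_trigPoly_mul]
  simp only [mul_ne_zero_iff] at h0' hη'
  obtain ⟨hc, hP0, hPπ⟩ := h0'
  obtain ⟨-, hPη, hPηπ⟩ := hη'
  generalize (-2 * I) ^ N = c at *
  generalize trigPoly p l = P0 at *
  generalize trigPoly p (l + iπ) = Pπ at *
  generalize trigPoly p (l - η) = Pη at *
  generalize trigPoly p (l - η + iπ) = Pηπ at *
  generalize trigPoly q l = Q0 at *
  generalize trigPoly q (l - η) = Qη at *
  field_simp
  refine mul_left_cancel₀ hP0 ?_
  linear_combination (-(β * Qη * Pπ * ε)) * hTQP + (β * Qη * Pπ * τP * P0) * hε +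
    (β * ε * A * Qη) * hPper - (β * ε * P0 * Pηπ) * hTQQ

theorem overlap_izergin_tau_general (N : ℕ) (η : ℂ) (ξ p q : Fin N → ℂ)
    (P Q a : ℂ → ℂ)
    (hP : P = trigPoly p) (hQ : Q = trigPoly q) (ha : a = afun η ξ)
    (ε ε' : ℂ) (hε : ε = 1 ∨ ε = -1)
    (τP τQ : ℂ → ℂ)
    (hTQP : ∀ i, ε * τP (ξ i) * P (ξ i) = -(a (ξ i) * P (ξ i - η)))
    (hTQQ : ∀ i, ε' * τQ (ξ i) * Q (ξ i) = -(a (ξ i) * Q (ξ i - η)))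
    (hPper : ∀ i, P (ξ i - η) * P (ξ i + iπ) = -(P (ξ i - η + iπ) * P (ξ i)))
    (hQξη : ∀ i, Q (ξ i - η) ≠ 0)
    (hτQ : ∀ i, τQ (ξ i) ≠ 0)
    (hpp : ∀ i j, i ≠ j → ∀ m : ℤ, p i - p j ≠ (m : ℂ) * iπ)
    (hξp : ∀ i k, ∀ m : ℤ, ξ i - p k ≠ (m : ℂ) * iπ)
    (hξpη : ∀ i k, ∀ m : ℤ, ξ i - p k - η ≠ (m : ℂ) * iπ)
    (β : ℂ) :
    SP η ξ P Q (ε * ε' * β) =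
      Matrix.det (Matrix.of (fun i k : Fin N =>
          τQ (ξ i) / Complex.sinh (ξ i - p k) -
            β * τP (ξ i) / Complex.sinh (ξ i - p k - η))) /
        Matrix.det (Matrix.of (fun i k : Fin N =>
          τQ (ξ i) / Complex.sinh (ξ i - p k))) := by
  subst hP hQ ha
  have hε2 : ε * ε = 1 := by rcases hε with rfl | rfl <;> norm_num
  have h0 : ∀ i k, sinh (ξ i - p k) ≠ 0 := fun i k => sinh_ne_zero_of_forall_ne_int_mul_iπ (hξp i k)
  have hη : ∀ i k, sinh (ξ i - p k - η) ≠ 0 := fun i k =>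
    sinh_ne_zero_of_forall_ne_int_mul_iπ (hξpη i k)
  have hT : ∏ i, τQ (ξ i) / ∏ k, sinh (ξ i - p k) ≠ 0 := prod_ne_zero_iff.mpr fun i _ =>
    div_ne_zero (hτQ i) (prod_ne_zero_iff.mpr fun k _ => h0 i k)
  have hVp : Vand (-p) ≠ 0 := vand_ne_zero fun i j hij m => by
    rw [Pi.neg_apply, Pi.neg_apply, neg_sub_neg]
    exact hpp j i hij.symm m
  rw [det_sub_div_sinh_sub_shift _ _ _ _ _ h0 hη, det_div_sinh_sub _ _ _ h0, SP, sum_div]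
  refine sum_congr rfl fun c _ => ?_
  rw [prod_congr rfl fun i _ => row_weight_eq p q hε2 (hTQP i) (hTQQ i) (hPper i) (h0 i) (hη i)
    (hQξη i) (c i), prod_mul_distrib, mul_div_mul_comm, mul_div_mul_comm,
    mul_div_cancel_right₀ _ hT, div_self hVp, mul_one, mul_div_assoc]

/-- Izergin-type representation of the overlap of two twisted
eigenstates, directly in terms of the transfer matrix eigenvalues. -/
theorem overlap_izergin_tau (N : ℕ) (hN : 1 ≤ N) (η : ℂ) (ξ p q : Fin N → ℂ)
    (P Q a : ℂ → ℂ)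
    (hP : P = trigPoly p) (hQ : Q = trigPoly q) (ha : a = afun η ξ)
    (ε ε' : ℂ) (hε : ε = 1 ∨ ε = -1) (hε' : ε' = 1 ∨ ε' = -1)
    (τP τQ : ℂ → ℂ)
    (hTQP : ∀ i, ε * τP (ξ i) * P (ξ i) = -(a (ξ i) * P (ξ i - η)))
    (hTQQ : ∀ i, ε' * τQ (ξ i) * Q (ξ i) = -(a (ξ i) * Q (ξ i - η)))
    (hPper : ∀ i, P (ξ i - η) * P (ξ i + iπ) = -(P (ξ i - η + iπ) * P (ξ i)))
    (hPξ : ∀ i, P (ξ i) ≠ 0)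
    (hPξπ : ∀ i, P (ξ i + iπ) ≠ 0)
    (hQξ : ∀ i, Q (ξ i) ≠ 0)
    (hQξη : ∀ i, Q (ξ i - η) ≠ 0)
    (hτQ : ∀ i, τQ (ξ i) ≠ 0)
    (hξξ : ∀ i j, i ≠ j → ∀ m : ℤ, ξ i - ξ j ≠ (m : ℂ) * iπ)
    (hpp : ∀ i j, i ≠ j → ∀ m : ℤ, p i - p j ≠ (m : ℂ) * iπ)
    (hξp : ∀ i k, ∀ m : ℤ, ξ i - p k ≠ (m : ℂ) * iπ)
    (hξpη : ∀ i k, ∀ m : ℤ, ξ i - p k - η ≠ (m : ℂ) * iπ)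
    (β : ℂ) :
    SP η ξ P Q (ε * ε' * β) =
      Matrix.det (Matrix.of (fun i k : Fin N =>
          τQ (ξ i) / Complex.sinh (ξ i - p k) -
            β * τP (ξ i) / Complex.sinh (ξ i - p k - η))) /
        Matrix.det (Matrix.of (fun i k : Fin N =>
          τQ (ξ i) / Complex.sinh (ξ i - p k))) :=
  overlap_izergin_tau_general N η ξ p q P Q a hP hQ ha ε ε' hε τP τQ hTQP hTQQ hPper hQξη hτQ hpp
    hξp hξpη β

end
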